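/- arXiv:1703.06403 — 2 statements merged into one kernel-verified Lean document; each statement's English description precedes it below -/
import Mathlib

section
/- Let K be a convex body in ℝⁿ and let λ ∈ [0,1]. Then ∫₀¹ vol_n((1−η)(1−λ)K + η(−λK)) dη ≤ vol_n(K)/(n+1), where the integrand is the volume of the Minkowski sum (1−η)(1−λ)K + η(λ(−K)). -/
/-!
Let `S(t) = (1-t)(1-λ)K + tλ(-K)` and let `C ⊆ ℝ × ℝⁿ` be the convex body with slices
`{t} × S(t)`, `t ∈ [0,1]`, so that the integral is `vol C`. Integrate the overlap function
`h(t, x) = vol((1-t)(1-λ)K ∩ (x + tλK))` over `C` in two ways. By Fubini and translation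
invariance, `∫_C h ≤ λⁿ(1-λ)ⁿ vol(K)² ∫₀¹ tⁿ(1-t)ⁿ dt`. On the other hand, the slice of `C` at
`t = 1 - λ` is `λ(1-λ)(K - K)`, so `C` is a neighbourhood of `z₀ = (1 - λ, 0)`; if
`z = z₀ + ρ(w - z₀)` with `w ∈ C`, convexity of `K` puts a translate of `(1-ρ)λ(1-λ)K` inside the
overlap set at `z`. The gauge `ρ` of `C` about `z₀` has density `(n+1)ρⁿ` on `C`, so
`∫_C h ≥ (n+1) λⁿ(1-λ)ⁿ vol(K) vol(C) ∫₀¹ ρⁿ(1-ρ)ⁿ dρ`, and comparing the two bounds gives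
`(n+1) vol C ≤ vol K`. For `λ ∈ {0, 1}` the body `C` is a cone and the integral is computed
directly.
-/

open MeasureTheory Set Pointwise Module Filter Topology Metric
open scoped ENNReal

theorem lintegral_Icc_ofReal_eq_ofReal_integral {f : ℝ → ℝ} {a b : ℝ} (hab : a ≤ b)
    (hf : ContinuousOn f (Icc a b)) (hf₀ : ∀ x ∈ Icc a b, 0 ≤ f x) :
    ∫⁻ x in Icc a b, ENNReal.ofReal (f x) = ENNReal.ofReal (∫ x in a..b, f x) := by
  rw [intervalIntegral.integral_of_le hab, ← integral_Icc_eq_integral_Ioc,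
    ofReal_integral_eq_lintegral_ofReal hf.integrableOn_Icc
      (ae_restrict_of_forall_mem measurableSet_Icc hf₀)]

theorem lintegral_Icc_ofReal_pow (d : ℕ) {m : ℝ} (hm : 0 ≤ m) :
    ∫⁻ u in Icc 0 m, ENNReal.ofReal (u ^ d) = ENNReal.ofReal (m ^ (d + 1)) / (d + 1) := by
  rw [lintegral_Icc_ofReal_eq_ofReal_integral hm (by fun_prop) fun u hu ↦ pow_nonneg hu.1 d,
    integral_pow, ENNReal.ofReal_div_of_pos (by positivity)]
  norm_num
  norm_cast

theorem lintegral_Icc_ofReal_mul_one_sub_pow_eq (d : ℕ) :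
    ∫⁻ t in Icc (0 : ℝ) 1, ENNReal.ofReal ((t * (1 - t)) ^ d) =
      ENNReal.ofReal (∫ t in (0 : ℝ)..1, (t * (1 - t)) ^ d) :=
  lintegral_Icc_ofReal_eq_ofReal_integral zero_le_one (by fun_prop)
    fun t ht ↦ pow_nonneg (mul_nonneg ht.1 (sub_nonneg.2 ht.2)) d

theorem lintegral_Icc_ofReal_mul_one_sub_pow_ne_zero (d : ℕ) :
    ∫⁻ t in Icc (0 : ℝ) 1, ENNReal.ofReal ((t * (1 - t)) ^ d) ≠ 0 := by
  rw [lintegral_Icc_ofReal_mul_one_sub_pow_eq, ENNReal.ofReal_ne_zero_iff]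
  exact intervalIntegral.intervalIntegral_pos_of_pos_on
    ((by fun_prop : Continuous fun t : ℝ ↦ (t * (1 - t)) ^ d).intervalIntegrable 0 1)
    (fun t ht ↦ pow_pos (mul_pos ht.1 (sub_pos.2 ht.2)) d) zero_lt_one

theorem lintegral_Icc_ofReal_mul_one_sub_pow_ne_top (d : ℕ) :
    ∫⁻ t in Icc (0 : ℝ) 1, ENNReal.ofReal ((t * (1 - t)) ^ d) ≠ ⊤ := by
  rw [lintegral_Icc_ofReal_mul_one_sub_pow_eq]
  exact ENNReal.ofReal_ne_top

theorem neg_vadd_mem_nhds_zero {G : Type*} [TopologicalSpace G] [AddGroup G] [ContinuousAdd G]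
    {s : Set G} {c : G} (hs : s ∈ 𝓝 c) : -c +ᵥ s ∈ 𝓝 0 := by
  rwa [← vadd_mem_nhds_vadd_iff (-c), vadd_eq_add, neg_add_cancel] at hs

theorem Convex.add_mem_smul {𝕜 E : Type*} [Field 𝕜] [LinearOrder 𝕜] [IsStrictOrderedRing 𝕜]
    [AddCommGroup E] [Module 𝕜 E] {K : Set E} (hK : Convex 𝕜 K) {a b : 𝕜} (ha : 0 ≤ a)
    (hb : 0 ≤ b) {x y : E} (hx : x ∈ a • K) (hy : y ∈ b • K) : x + y ∈ (a + b) • K := by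
  rw [hK.add_smul ha hb]
  exact add_mem_add hx hy

theorem lintegral_measure_inter_vadd {G : Type*} [AddCommGroup G] [MeasurableSpace G]
    [MeasurableAdd₂ G] [MeasurableNeg G] (μ : Measure G) [SFinite μ] [μ.IsAddLeftInvariant]
    [μ.IsNegInvariant] {A B : Set G} (hA : MeasurableSet A) (hB : MeasurableSet B) :
    ∫⁻ x, μ (A ∩ (x +ᵥ B)) ∂μ = μ A * μ B := by
  set W : Set (G × G) := {p | p.2 ∈ A ∧ p.2 - p.1 ∈ B}
  have hW : MeasurableSet W := (measurable_snd hA).inter ((measurable_snd.sub measurable_fst) hB)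
  have hslice : ∀ x, A ∩ (x +ᵥ B) = Prod.mk x ⁻¹' W := fun x ↦ by
    ext y
    simp [W, mem_vadd_set_iff_neg_vadd_mem, neg_add_eq_sub]
  calc ∫⁻ x, μ (A ∩ (x +ᵥ B)) ∂μ
      = μ.prod μ W := by simp_rw [hslice, Measure.prod_apply hW]
    _ = ∫⁻ y, A.indicator (fun _ ↦ μ B) y ∂μ := by
        rw [Measure.prod_apply_symm hW]
        congr with y
        by_cases hy : y ∈ A
        · have : (fun x ↦ (x, y)) ⁻¹' W = (y - ·) ⁻¹' B := by ext; simp [W, hy]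
          rw [indicator_of_mem hy, this,
            (Measure.measurePreserving_sub_left μ y).measure_preimage hB.nullMeasurableSet]
        · have : (fun x ↦ (x, y)) ⁻¹' W = ∅ := by ext; simp [W, hy]
          rw [indicator_of_notMem hy, this, measure_empty]
    _ = μ A * μ B := by rw [lintegral_indicator_const hA, mul_comm]

section Gauge

variable {E : Type*} [NormedAddCommGroup E] [NormedSpace ℝ E] {s : Set E}

theorem gauge_le_one_iff_mem (hc : Convex ℝ s) (hcl : IsClosed s) (hs₀ : s ∈ 𝓝 0) {x : E} :
    gauge s x ≤ 1 ↔ x ∈ s := by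
  rw [gauge_le_one_iff_mem_closure hc hs₀, hcl.closure_eq]

theorem setOf_gauge_le_eq_smul (hc : Convex ℝ s) (hcl : IsClosed s) (hb : Bornology.IsBounded s)
    (hs₀ : s ∈ 𝓝 0) {r : ℝ} (hr : 0 ≤ r) : {x | gauge s x ≤ r} = r • s := by
  ext x
  rcases hr.eq_or_lt with rfl | hr
  · rw [zero_smul_set (nonempty_of_mem (mem_of_mem_nhds hs₀)), mem_ofPred_eq,
      (gauge_nonneg x).ge_iff_eq', gauge_eq_zero (absorbent_nhds_zero hs₀)
        ((NormedSpace.isVonNBounded_iff ℝ).2 hb), Set.mem_zero]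
  · rw [mem_ofPred_eq, mem_smul_set_iff_inv_smul_mem₀ hr.ne', ← gauge_le_one_iff_mem hc hcl hs₀,
      gauge_smul_of_nonneg (inv_nonneg.2 hr.le), smul_eq_mul, inv_mul_le_iff₀ hr, mul_one]

variable [FiniteDimensional ℝ E] [MeasurableSpace E] [BorelSpace E] (μ : Measure E)
  [μ.IsAddHaarMeasure] {d : ℕ}

theorem map_gauge_restrict (hd : finrank ℝ E = d + 1) (hs : IsCompact s) (hc : Convex ℝ s)
    (hs₀ : s ∈ 𝓝 0) :
    (μ.restrict s).map (gauge s) =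
      μ s • (volume.restrict (Icc 0 1)).withDensity fun r ↦ (d + 1) * ENNReal.ofReal (r ^ d) := by
  have hmeas : Measurable (gauge s) := (continuous_gauge hc hs₀).measurable
  have : IsFiniteMeasure (μ.restrict s) := isFiniteMeasure_restrict.2 hs.measure_lt_top.ne
  refine Measure.ext_of_Iic _ _ fun r ↦ ?_
  rw [Measure.map_apply hmeas measurableSet_Iic, Measure.restrict_apply (hmeas measurableSet_Iic),
    Measure.smul_apply, withDensity_apply _ measurableSet_Iic,
    Measure.restrict_restrict measurableSet_Iic, smul_eq_mul]
  rcases lt_or_ge r 0 with hr | hr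
  · have h₁ : gauge s ⁻¹' Iic r ∩ s = ∅ :=
      eq_empty_of_forall_notMem fun x hx ↦ (gauge_nonneg x).not_gt (hx.1.trans_lt hr)
    have h₂ : Iic r ∩ Icc (0 : ℝ) 1 = ∅ :=
      eq_empty_of_forall_notMem fun u hu ↦ hu.2.1.not_gt (hu.1.trans_lt hr)
    simp [h₁, h₂]
  · set m := min r 1
    have hm : 0 ≤ m := le_min hr zero_le_one
    have h₁ : gauge s ⁻¹' Iic r ∩ s = m • s := by
      rw [← setOf_gauge_le_eq_smul hc hs.isClosed hs.isBounded hs₀ hm]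
      ext x
      rw [mem_inter_iff, ← gauge_le_one_iff_mem hc hs.isClosed hs₀]
      simp only [mem_preimage, mem_Iic, mem_ofPred_eq, le_min_iff, m]
    have h₂ : Iic r ∩ Icc (0 : ℝ) 1 = Icc 0 m := by
      ext u
      simp only [mem_inter_iff, mem_Iic, mem_Icc, le_min_iff, m]
      tauto
    rw [h₁, h₂, Measure.addHaar_smul_of_nonneg μ hm, hd, lintegral_const_mul _ (by fun_prop),
      lintegral_Icc_ofReal_pow d hm, ENNReal.mul_div_cancel (by positivity) (by simp), mul_comm]

theorem setLIntegral_comp_gauge_sub (hd : finrank ℝ E = d + 1) (hs : IsCompact s)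
    (hc : Convex ℝ s) {c : E} (hs₀ : s ∈ 𝓝 c) {f : ℝ → ℝ≥0∞} (hf : Measurable f) :
    ∫⁻ x in s, f (gauge (-c +ᵥ s) (x - c)) ∂μ =
      (d + 1) * μ s * ∫⁻ r in Icc 0 1, ENNReal.ofReal (r ^ d) * f r := by
  set t := -c +ᵥ s
  have ht₀ : t ∈ 𝓝 0 := neg_vadd_mem_nhds_zero hs₀
  have hgauge : Measurable (gauge t) := (continuous_gauge (hc.vadd _) ht₀).measurable
  have hpre : (· - c) ⁻¹' t = s := by
    ext x
    rw [mem_preimage, mem_vadd_set_iff_neg_vadd_mem, neg_neg, vadd_eq_add, add_sub_cancel]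
  calc ∫⁻ x in s, f (gauge t (x - c)) ∂μ
      = ∫⁻ y in t, f (gauge t y) ∂μ := by
        rw [← hpre]
        exact (measurePreserving_sub_right μ c).setLIntegral_comp_preimage
          (hs.measurableSet.const_vadd _) (hf.comp hgauge)
    _ = ∫⁻ r, f r ∂((μ.restrict t).map (gauge t)) := (lintegral_map hf hgauge).symm
    _ = (d + 1) * μ s * ∫⁻ r in Icc 0 1, ENNReal.ofReal (r ^ d) * f r := by
        rw [map_gauge_restrict μ hd (hs.vadd _) (hc.vadd _) ht₀, lintegral_smul_measure,
          lintegral_withDensity_eq_lintegral_mul _ (by fun_prop) hf, measure_vadd, smul_eq_mul]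
        simp only [Pi.mul_apply, mul_assoc]
        rw [lintegral_const_mul' _ _ (by simp)]
        ring

end Gauge

namespace Godbersen

section Module

variable {E : Type*} [AddCommGroup E] [Module ℝ E] {K : Set E} {lam : ℝ}

def slice (K : Set E) (lam t : ℝ) : Set E := ((1 - t) * (1 - lam)) • K + (t * lam) • -K

def body (K : Set E) (lam : ℝ) : Set (ℝ × E) := {z | z.1 ∈ Icc 0 1 ∧ z.2 ∈ slice K lam z.1}

variable (E) in
def center (lam : ℝ) : ℝ × E := (1 - lam, 0)

theorem smul_slice_add_smul_slice (hK : Convex ℝ K) (hlam : lam ∈ Icc 0 1) {s t σ τ : ℝ}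
    (hs : s ∈ Icc 0 1) (ht : t ∈ Icc 0 1) (hσ : 0 ≤ σ) (hτ : 0 ≤ τ) (hστ : σ + τ = 1) :
    σ • slice K lam s + τ • slice K lam t = slice K lam (σ * s + τ * t) := by
  obtain ⟨hl₀, hl₁⟩ := hlam
  simp only [slice, smul_add, smul_smul]
  rw [add_add_add_comm,
    ← hK.add_smul (mul_nonneg hσ (mul_nonneg (sub_nonneg.2 hs.2) (sub_nonneg.2 hl₁)))
      (mul_nonneg hτ (mul_nonneg (sub_nonneg.2 ht.2) (sub_nonneg.2 hl₁))),
    ← hK.neg.add_smul (mul_nonneg hσ (mul_nonneg hs.1 hl₀)) (mul_nonneg hτ (mul_nonneg ht.1 hl₀))]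
  congr 2
  · linear_combination (1 - lam) * hστ
  · ring

theorem convex_body (hK : Convex ℝ K) (hlam : lam ∈ Icc 0 1) : Convex ℝ (body K lam) := by
  rintro ⟨s, x⟩ ⟨hs, hx⟩ ⟨t, y⟩ ⟨ht, hy⟩ σ τ hσ hτ hστ
  refine ⟨convex_Icc 0 1 hs ht hσ hτ hστ, ?_⟩
  simp only [Prod.snd_add, Prod.fst_add, Prod.smul_fst, Prod.smul_snd, smul_eq_mul]
  rw [← smul_slice_add_smul_slice hK hlam hs ht hσ hτ hστ]
  exact add_mem_add (smul_mem_smul_set hx) (smul_mem_smul_set hy)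

theorem slice_zero (hK : K.Nonempty) (t : ℝ) : slice K 0 t = (1 - t) • K := by
  rw [slice, mul_zero, zero_smul_set hK.neg, sub_zero, mul_one, add_zero]

theorem slice_one (hK : K.Nonempty) (t : ℝ) : slice K 1 t = t • -K := by
  rw [slice, sub_self, mul_zero, zero_smul_set hK, mul_one, zero_add]

end Module

variable {E : Type*} [NormedAddCommGroup E] [NormedSpace ℝ E] {K : Set E} {lam : ℝ}

theorem isCompact_body (hK : IsCompact K) : IsCompact (body K lam) := by
  have : body K lam = (fun w : ℝ × E × E ↦
      (w.1, ((1 - w.1) * (1 - lam)) • w.2.1 + (w.1 * lam) • -w.2.2)) '' (Icc 0 1 ×ˢ K ×ˢ K) := by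
    ext ⟨t, x⟩
    simp only [body, slice, mem_ofPred_eq, mem_image, mem_prod, Prod.mk.injEq, Prod.exists,
      Set.mem_add]
    constructor
    · rintro ⟨ht, _, ⟨p, hp, rfl⟩, _, ⟨q, hq, rfl⟩, rfl⟩
      exact ⟨t, p, -q, ⟨ht, hp, hq⟩, rfl, by rw [neg_neg]⟩
    · rintro ⟨t, p, q, ⟨ht, hp, hq⟩, ⟨rfl, rfl⟩, rfl⟩
      exact ⟨ht, _, ⟨p, hp, rfl⟩, _, ⟨-q, Set.neg_mem_neg.2 hq, rfl⟩, rfl⟩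
  rw [this]
  exact (isCompact_Icc.prod (hK.prod hK)).image (by fun_prop)

theorem body_mem_nhds (hK : (interior K).Nonempty) (hlam : lam ∈ Ioo 0 1) :
    body K lam ∈ 𝓝 (center E lam) := by
  unfold center
  obtain ⟨k, hk⟩ := hK
  obtain ⟨δ, hδ, hball⟩ := Metric.isOpen_iff.1 isOpen_interior k hk
  set U := {z : ℝ × E | z.1 ∈ Ioo 0 1 ∧
    ‖z.2 + (z.1 - (1 - lam)) • k‖ < (1 - z.1) * (1 - lam) * δ}
  have hU : IsOpen U := (isOpen_Ioo.preimage continuous_fst).inter <|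
    isOpen_lt (by fun_prop : Continuous fun z : ℝ × E ↦ ‖z.2 + (z.1 - (1 - lam)) • k‖)
      (by fun_prop)
  refine mem_of_superset (hU.mem_nhds ⟨⟨by linarith [hlam.2], by linarith [hlam.1]⟩, ?_⟩) ?_
  · simpa using mul_pos (mul_pos (by linarith [hlam.1]) (by linarith [hlam.2])) hδ
  rintro ⟨t, x⟩ ⟨ht, hx : ‖x + (t - (1 - lam)) • k‖ < (1 - t) * (1 - lam) * δ⟩
  set a := (1 - t) * (1 - lam)
  have ha : 0 < a := mul_pos (by linarith [ht.2]) (by linarith [hlam.2])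
  -- `x = a • p + (t * lam) • (-k)` with `p` close to the interior point `k`
  have hp : a⁻¹ • (x + (t * lam) • k) ∈ ball k δ := by
    have : a⁻¹ • (x + (t * lam) • k) - k = a⁻¹ • (x + (t - (1 - lam)) • k) := by
      calc a⁻¹ • (x + (t * lam) • k) - k = a⁻¹ • (x + (t * lam) • k - a • k) := by
            rw [smul_sub, inv_smul_smul₀ ha.ne']
        _ = a⁻¹ • (x + (t - (1 - lam)) • k) := by module
    rw [mem_ball, dist_eq_norm, this, norm_smul, norm_inv, Real.norm_of_nonneg ha.le,
      inv_mul_lt_iff₀ ha]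
    exact hx
  refine ⟨Ioo_subset_Icc_self ht, _, smul_mem_smul_set (interior_subset (hball hp)), _,
    smul_mem_smul_set (Set.neg_mem_neg.2 (interior_subset hk)), ?_⟩
  change a • a⁻¹ • (x + (t * lam) • k) + (t * lam) • -k = x
  rw [smul_inv_smul₀ ha.ne', smul_neg, add_neg_cancel_right]

noncomputable def bodyGauge (K : Set E) (lam : ℝ) (z : ℝ × E) : ℝ :=
  gauge (-center E lam +ᵥ body K lam) (z - center E lam)

variable [FiniteDimensional ℝ E] [MeasurableSpace E] [BorelSpace E] (μ : Measure E)
  [μ.IsAddHaarMeasure]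

def overlap (K : Set E) (lam : ℝ) (z : ℝ × E) : ℝ≥0∞ :=
  μ (((1 - z.1) * (1 - lam)) • K ∩ (z.2 +ᵥ (z.1 * lam) • K))

theorem volume_prod_body (hK : IsCompact K) :
    (volume.prod μ) (body K lam) = ∫⁻ t in Icc 0 1, μ (slice K lam t) := by
  rw [Measure.prod_apply (isCompact_body hK).measurableSet, ← lintegral_indicator measurableSet_Icc]
  congr with t
  by_cases ht : t ∈ Icc (0 : ℝ) 1
  · rw [indicator_of_mem ht]
    congr 1
    ext x
    exact and_iff_right ht
  · rw [indicator_of_notMem ht]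
    convert measure_empty (μ := μ)
    exact eq_empty_of_forall_notMem fun x hx ↦ ht hx.1

theorem setLIntegral_overlap_le (hK : IsCompact K) (hlam : lam ∈ Icc 0 1) :
    ∫⁻ z in body K lam, overlap μ K lam z ∂(volume.prod μ) ≤
      ENNReal.ofReal ((lam * (1 - lam)) ^ finrank ℝ E) * μ K ^ 2 *
        ∫⁻ t in Icc 0 1, ENNReal.ofReal ((t * (1 - t)) ^ finrank ℝ E) := by
  calc ∫⁻ z in body K lam, overlap μ K lam z ∂(volume.prod μ)
      ≤ ∫⁻ z in Icc 0 1 ×ˢ univ, overlap μ K lam z ∂(volume.prod μ) :=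
        lintegral_mono_set fun z hz ↦ ⟨hz.1, trivial⟩
    _ ≤ ∫⁻ t in Icc 0 1, ∫⁻ x, overlap μ K lam (t, x) ∂μ := by
        rw [← Measure.prod_restrict, Measure.restrict_univ]
        exact lintegral_prod_le _
    _ = ∫⁻ t in Icc 0 1, ENNReal.ofReal ((lam * (1 - lam)) ^ finrank ℝ E) * μ K ^ 2 *
          ENNReal.ofReal ((t * (1 - t)) ^ finrank ℝ E) := by
        refine setLIntegral_congr_fun measurableSet_Icc fun t ht ↦ ?_
        have ha : 0 ≤ (1 - t) * (1 - lam) :=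
          mul_nonneg (sub_nonneg.2 ht.2) (sub_nonneg.2 hlam.2)
        have hb : 0 ≤ t * lam := mul_nonneg ht.1 hlam.1
        have hab : ((1 - t) * (1 - lam)) ^ finrank ℝ E * (t * lam) ^ finrank ℝ E =
            (lam * (1 - lam)) ^ finrank ℝ E * (t * (1 - t)) ^ finrank ℝ E := by
          rw [← mul_pow, ← mul_pow]
          ring
        simp only [overlap]
        rw [lintegral_measure_inter_vadd μ (hK.smul _).measurableSet (hK.smul _).measurableSet,
          Measure.addHaar_smul_of_nonneg μ ha, Measure.addHaar_smul_of_nonneg μ hb,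
          mul_mul_mul_comm, ← ENNReal.ofReal_mul (pow_nonneg ha _), hab,
          ENNReal.ofReal_mul (pow_nonneg (mul_nonneg hlam.1 (sub_nonneg.2 hlam.2)) _), sq]
        ring
    _ = _ := lintegral_const_mul _ (by fun_prop)

theorem ofReal_pow_mul_le_overlap (hK : Convex ℝ K) (hlam : lam ∈ Icc 0 1) {w : ℝ × E}
    (hw : w ∈ body K lam) {ρ : ℝ} (hρ : ρ ∈ Icc 0 1) :
    ENNReal.ofReal (((1 - ρ) * (lam * (1 - lam))) ^ finrank ℝ E) * μ K ≤
      overlap μ K lam (center E lam + ρ • (w - center E lam)) := by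
  obtain ⟨s, ξ⟩ := w
  obtain ⟨hs, u, hu, v, hv, rfl⟩ := hw
  dsimp only at hs hu hv
  obtain ⟨hl₀, hl₁⟩ := hlam
  set c := (1 - ρ) * (lam * (1 - lam))
  have hc : 0 ≤ c := mul_nonneg (by linarith [hρ.2]) (mul_nonneg hl₀ (by linarith))
  have hu' : ρ • u ∈ (ρ * ((1 - s) * (1 - lam))) • K := by
    rw [← smul_smul]
    exact smul_mem_smul_set hu
  have hv' : ρ • -v ∈ (ρ * (s * lam)) • K := by
    rw [smul_set_neg, Set.mem_neg] at hv
    rw [← smul_smul]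
    exact smul_mem_smul_set hv
  have hsub : ρ • u +ᵥ c • K ⊆ ((1 - (1 - lam + ρ * (s - (1 - lam)))) * (1 - lam)) • K ∩
      (ρ • (u + v) +ᵥ ((1 - lam + ρ * (s - (1 - lam))) * lam) • K) := by
    rintro _ ⟨p, hp, rfl⟩
    change ρ • u + p ∈ _ ∩ _
    constructor
    · convert hK.add_mem_smul (mul_nonneg hρ.1 (mul_nonneg (by linarith [hs.2]) (by linarith)))
        hc hu' hp using 2
      ring
    · rw [mem_vadd_set_iff_neg_vadd_mem]
      convert hK.add_mem_smul hc (mul_nonneg hρ.1 (mul_nonneg hs.1 hl₀)) hp hv' using 1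
      · congr 1
        ring
      · rw [vadd_eq_add, smul_add, smul_neg]
        abel
  calc ENNReal.ofReal (c ^ finrank ℝ E) * μ K = μ (ρ • u +ᵥ c • K) := by
        rw [measure_vadd, Measure.addHaar_smul_of_nonneg μ hc]
    _ ≤ _ := by
        simp only [overlap, center, Prod.fst_add, Prod.snd_add, Prod.smul_fst, Prod.smul_snd,
          Prod.fst_sub, Prod.snd_sub, smul_eq_mul, sub_zero, zero_add]
        exact measure_mono hsub

variable {μ} in
theorem ofReal_pow_mul_bodyGauge_le_overlap (hK : IsCompact K) (hconv : Convex ℝ K)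
    (hint : (interior K).Nonempty) (hlam : lam ∈ Ioo 0 1) {z : ℝ × E} (hz : z ∈ body K lam) :
    ENNReal.ofReal ((lam * (1 - lam)) ^ finrank ℝ E) * μ K *
        ENNReal.ofReal ((1 - bodyGauge K lam z) ^ finrank ℝ E) ≤ overlap μ K lam z := by
  rw [bodyGauge]
  set C := -center E lam +ᵥ body K lam
  set ρ := gauge C (z - center E lam)
  have hC : IsCompact C := (isCompact_body hK).vadd _
  have hz₀ : z - center E lam ∈ C := by
    rwa [mem_vadd_set_iff_neg_vadd_mem, neg_neg, vadd_eq_add, add_sub_cancel]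
  have hρz : z - center E lam ∈ ρ • C := by
    rw [← setOf_gauge_le_eq_smul ((convex_body hconv (Ioo_subset_Icc_self hlam)).vadd _)
      hC.isClosed hC.isBounded (neg_vadd_mem_nhds_zero (body_mem_nhds hint hlam))
      (gauge_nonneg _)]
    exact le_refl ρ
  obtain ⟨_, ⟨w, hw, rfl⟩, hzw⟩ := hρz
  have hzeq : center E lam + ρ • (w - center E lam) = z := by
    change ρ • (-center E lam + w) = z - center E lam at hzw
    rw [← neg_add_eq_sub _ w, hzw, add_sub_cancel]
  have := ofReal_pow_mul_le_overlap μ hconv (Ioo_subset_Icc_self hlam) hw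
    ⟨gauge_nonneg _, gauge_le_one_of_mem hz₀⟩
  rw [hzeq, mul_comm (1 - ρ), mul_pow,
    ENNReal.ofReal_mul (pow_nonneg (mul_nonneg hlam.1.le (sub_nonneg.2 hlam.2.le)) _)] at this
  rwa [mul_right_comm]

theorem setLIntegral_ofReal_one_sub_bodyGauge_pow (hK : IsCompact K) (hconv : Convex ℝ K)
    (hint : (interior K).Nonempty) (hlam : lam ∈ Ioo 0 1) :
    ∫⁻ z in body K lam, ENNReal.ofReal ((1 - bodyGauge K lam z) ^ finrank ℝ E) ∂(volume.prod μ) =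
      (finrank ℝ E + 1) * (volume.prod μ) (body K lam) *
        ∫⁻ t in Icc 0 1, ENNReal.ofReal ((t * (1 - t)) ^ finrank ℝ E) := by
  have hdim : finrank ℝ (ℝ × E) = finrank ℝ E + 1 := by
    rw [Module.finrank_prod, Module.finrank_self, add_comm]
  simp only [bodyGauge]
  rw [setLIntegral_comp_gauge_sub (volume.prod μ) hdim (isCompact_body hK)
    (convex_body hconv (Ioo_subset_Icc_self hlam)) (body_mem_nhds hint hlam)
    (f := fun r ↦ ENNReal.ofReal ((1 - r) ^ finrank ℝ E)) (by fun_prop)]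
  congr 1
  refine setLIntegral_congr_fun measurableSet_Icc fun r hr ↦ ?_
  rw [← ENNReal.ofReal_mul (pow_nonneg hr.1 _), ← mul_pow]

theorem mul_volume_prod_body_le (hK : IsCompact K) (hconv : Convex ℝ K)
    (hint : (interior K).Nonempty) (hlam : lam ∈ Ioo 0 1) :
    (finrank ℝ E + 1) * (volume.prod μ) (body K lam) ≤ μ K := by
  set c := ENNReal.ofReal ((lam * (1 - lam)) ^ finrank ℝ E)
  set β := ∫⁻ t in Icc 0 1, ENNReal.ofReal ((t * (1 - t)) ^ finrank ℝ E)
  have hc₀ : c ≠ 0 := by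
    rw [ENNReal.ofReal_ne_zero_iff]
    exact pow_pos (mul_pos hlam.1 (sub_pos.2 hlam.2)) _
  have hK₀ : μ K ≠ 0 := (μ.measure_pos_of_nonempty_interior hint).ne'
  have hKtop : μ K ≠ ⊤ := hK.measure_lt_top.ne
  refine (ENNReal.mul_le_mul_iff_right
    (mul_ne_zero (mul_ne_zero hc₀ hK₀) (lintegral_Icc_ofReal_mul_one_sub_pow_ne_zero (finrank ℝ E)))
    (ENNReal.mul_ne_top (ENNReal.mul_ne_top ENNReal.ofReal_ne_top hKtop)
      (lintegral_Icc_ofReal_mul_one_sub_pow_ne_top (finrank ℝ E)))).1 ?_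
  calc c * μ K * β * ((finrank ℝ E + 1) * (volume.prod μ) (body K lam))
      = ∫⁻ z in body K lam, c * μ K * ENNReal.ofReal ((1 - bodyGauge K lam z) ^ finrank ℝ E)
          ∂(volume.prod μ) := by
        rw [lintegral_const_mul' _ _ (ENNReal.mul_ne_top ENNReal.ofReal_ne_top hKtop),
          setLIntegral_ofReal_one_sub_bodyGauge_pow μ hK hconv hint hlam]
        ring
    _ ≤ ∫⁻ z in body K lam, overlap μ K lam z ∂(volume.prod μ) :=
        setLIntegral_mono' (isCompact_body hK).measurableSet
          fun z hz ↦ ofReal_pow_mul_bodyGauge_le_overlap hK hconv hint hlam hz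
    _ ≤ c * μ K ^ 2 * β := setLIntegral_overlap_le μ hK (Ioo_subset_Icc_self hlam)
    _ = c * μ K * β * μ K := by ring

theorem lintegral_measure_slice_zero (hK : K.Nonempty) :
    ∫⁻ t in Icc 0 1, μ (slice K 0 t) = μ K / (finrank ℝ E + 1) := by
  have hreflect : ∫⁻ t in Icc (0 : ℝ) 1, ENNReal.ofReal ((1 - t) ^ finrank ℝ E) =
      ∫⁻ t in Icc (0 : ℝ) 1, ENNReal.ofReal (t ^ finrank ℝ E) := by
    rw [lintegral_Icc_ofReal_eq_ofReal_integral zero_le_one (by fun_prop)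
        fun t ht ↦ pow_nonneg (sub_nonneg.2 ht.2) _,
      lintegral_Icc_ofReal_eq_ofReal_integral zero_le_one (by fun_prop)
        fun t ht ↦ pow_nonneg ht.1 _,
      intervalIntegral.integral_comp_sub_left (fun t ↦ t ^ finrank ℝ E), sub_self, sub_zero]
  calc ∫⁻ t in Icc 0 1, μ (slice K 0 t)
      = ∫⁻ t in Icc 0 1, ENNReal.ofReal ((1 - t) ^ finrank ℝ E) * μ K := by
        refine setLIntegral_congr_fun measurableSet_Icc fun t ht ↦ ?_
        rw [slice_zero hK, Measure.addHaar_smul_of_nonneg μ (sub_nonneg.2 ht.2)]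
    _ = μ K / (finrank ℝ E + 1) := by
        rw [lintegral_mul_const _ (by fun_prop), hreflect, lintegral_Icc_ofReal_pow _ zero_le_one,
          one_pow, ENNReal.ofReal_one, one_div, ← ENNReal.div_eq_inv_mul]

theorem lintegral_measure_slice_one (hK : K.Nonempty) :
    ∫⁻ t in Icc 0 1, μ (slice K 1 t) = μ K / (finrank ℝ E + 1) := by
  calc ∫⁻ t in Icc 0 1, μ (slice K 1 t)
      = ∫⁻ t in Icc 0 1, ENNReal.ofReal (t ^ finrank ℝ E) * μ K := by
        refine setLIntegral_congr_fun measurableSet_Icc fun t ht ↦ ?_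
        rw [slice_one hK, Measure.addHaar_smul_of_nonneg μ ht.1, Measure.measure_neg]
    _ = μ K / (finrank ℝ E + 1) := by
        rw [lintegral_mul_const _ (by fun_prop), lintegral_Icc_ofReal_pow _ zero_le_one,
          one_pow, ENNReal.ofReal_one, one_div, ← ENNReal.div_eq_inv_mul]

theorem lintegral_measure_slice_le (hK : IsCompact K) (hconv : Convex ℝ K)
    (hint : (interior K).Nonempty) (hlam : lam ∈ Icc 0 1) :
    ∫⁻ t in Icc 0 1, μ (slice K lam t) ≤ μ K / (finrank ℝ E + 1) := by
  have hne : K.Nonempty := hint.mono interior_subset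
  rcases hlam.1.eq_or_lt with rfl | h₀
  · exact (lintegral_measure_slice_zero μ hne).le
  rcases hlam.2.eq_or_lt with rfl | h₁
  · exact (lintegral_measure_slice_one μ hne).le
  rw [← volume_prod_body μ hK, ENNReal.le_div_iff_mul_le (by simp) (by simp), mul_comm]
  exact mul_volume_prod_body_le μ hK hconv hint ⟨h₀, h₁⟩

end Godbersen

theorem godbersen_stmt1 (n : ℕ) (K : Set (EuclideanSpace ℝ (Fin n)))
    (hK_compact : IsCompact K) (hK_conv : Convex ℝ K)
    (hK_int : (interior K).Nonempty)
    (lam : ℝ) (hlam : lam ∈ Set.Icc (0:ℝ) 1) :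
    ∫⁻ η in Set.Icc (0:ℝ) 1,
        volume ((1 - η) • ((1 - lam) • K) + η • (lam • (-K)))
      ≤ volume K / (n + 1) := by
  have h := Godbersen.lintegral_measure_slice_le volume hK_compact hK_conv hK_int hlam
  rw [finrank_euclideanSpace_fin] at h
  simpa only [Godbersen.slice, smul_smul] using h
end

section
/- Let K and L be convex bodies in ℝⁿ, both containing the origin. Then ⋃_{λ ∈ [0,1]} (λK ∩ (1−λ)L) = (K° + L°)°, where A° = {y ∈ ℝⁿ : ⟨x, y⟩ ≤ 1 for all x ∈ A} denotes the polar body of A with respect to the standard inner product. -/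
open MeasureTheory Set Pointwise
open scoped RealInnerProductSpace

/-- The polar body of a set `A ⊆ ℝⁿ`: all `y` with `⟪x, y⟫ ≤ 1` for every `x ∈ A`. -/
def polarBody {n : ℕ} (A : Set (EuclideanSpace ℝ (Fin n))) :
    Set (EuclideanSpace ℝ (Fin n)) :=
  {y | ∀ x ∈ A, ⟪x, y⟫ ≤ 1}

lemma zero_mem_polarBody {n : ℕ} (A : Set (EuclideanSpace ℝ (Fin n))) :
    (0 : EuclideanSpace ℝ (Fin n)) ∈ polarBody A := by
  intro x _
  simp

lemma bipolar {n : ℕ} {K : Set (EuclideanSpace ℝ (Fin n))}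
    (hc : IsClosed K) (hconv : Convex ℝ K) (h0 : (0 : EuclideanSpace ℝ (Fin n)) ∈ K) :
    polarBody (polarBody K) = K := by
  apply Set.Subset.antisymm
  · intro x hx
    by_contra hxK
    obtain ⟨f, u, hfu, hux⟩ := geometric_hahn_banach_closed_point hconv hc hxK
    have hu : 0 < u := by simpa using hfu 0 h0
    set v₀ := (InnerProductSpace.toDual ℝ (EuclideanSpace ℝ (Fin n))).symm f with hv₀
    have hrepr : ∀ z, ⟪v₀, z⟫ = f z := fun z =>
      InnerProductSpace.toDual_symm_apply
    set w := u⁻¹ • v₀ with hw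
    have hwK : w ∈ polarBody K := by
      intro k hk
      have : ⟪k, w⟫ = u⁻¹ * f k := by
        rw [real_inner_comm, hw, real_inner_smul_left, hrepr]
      rw [this]
      have := (hfu k hk).le
      calc u⁻¹ * f k ≤ u⁻¹ * u := by
            apply mul_le_mul_of_nonneg_left this (by positivity)
        _ = 1 := by field_simp
    have h1 : ⟪w, x⟫ ≤ 1 := hx w hwK
    have h2 : (1 : ℝ) < ⟪w, x⟫ := by
      have : ⟪w, x⟫ = u⁻¹ * f x := by
        rw [hw, real_inner_smul_left, hrepr]
      rw [this]
      rw [lt_inv_mul_iff₀ hu]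
      simpa using hux
    linarith
  · intro k hk y hy
    rw [real_inner_comm]
    exact hy k hk

lemma mem_smul_of_polar_le {n : ℕ} {K : Set (EuclideanSpace ℝ (Fin n))}
    (hc : IsClosed K) (hconv : Convex ℝ K) (h0 : (0 : EuclideanSpace ℝ (Fin n)) ∈ K)
    {x : EuclideanSpace ℝ (Fin n)} {t : ℝ} (ht : 0 < t)
    (h : ∀ u ∈ polarBody K, ⟪u, x⟫ ≤ t) : x ∈ t • K := by
  rw [Set.mem_smul_set_iff_inv_smul_mem₀ (ne_of_gt ht)]
  rw [← bipolar hc hconv h0]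
  intro u hu
  have : ⟪u, t⁻¹ • x⟫ = t⁻¹ * ⟪u, x⟫ := real_inner_smul_right _ _ _
  rw [this]
  calc t⁻¹ * ⟪u, x⟫ ≤ t⁻¹ * t := mul_le_mul_of_nonneg_left (h u hu) (by positivity)
    _ = 1 := by field_simp

theorem union_scaled_inter_eq_polar_sum (n : ℕ)
    (K L : Set (EuclideanSpace ℝ (Fin n)))
    (hK_compact : IsCompact K) (hK_conv : Convex ℝ K)
    (hK_int : (interior K).Nonempty) (hK0 : (0 : EuclideanSpace ℝ (Fin n)) ∈ K)
    (hL_compact : IsCompact L) (hL_conv : Convex ℝ L)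
    (hL_int : (interior L).Nonempty) (hL0 : (0 : EuclideanSpace ℝ (Fin n)) ∈ L) :
    ⋃ lam ∈ Set.Icc (0:ℝ) 1, (lam • K ∩ (1 - lam) • L)
      = polarBody (polarBody K + polarBody L) := by
  apply Set.Subset.antisymm
  · -- forward
    intro x hx
    simp only [Set.mem_iUnion] at hx
    obtain ⟨lam, ⟨hlam0, hlam1⟩, hxK, hxL⟩ := hx
    obtain ⟨k, hk, rfl⟩ := hxK
    obtain ⟨l, hl, hkl⟩ := hxL
    intro z hz
    rw [Set.mem_add] at hz
    obtain ⟨u, hu, v, hv, rfl⟩ := hz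
    have h1 : ⟪u, lam • k⟫ ≤ lam := by
      rw [real_inner_smul_right]
      have : ⟪u, k⟫ ≤ 1 := by rw [real_inner_comm]; exact hu k hk
      nlinarith
    have hkl' : (1 - lam) • l = lam • k := hkl
    have h2 : ⟪v, lam • k⟫ ≤ 1 - lam := by
      rw [← hkl', real_inner_smul_right]
      have : ⟪v, l⟫ ≤ 1 := by rw [real_inner_comm]; exact hv l hl
      nlinarith
    calc ⟪u + v, lam • k⟫ = ⟪u, lam • k⟫ + ⟪v, lam • k⟫ := inner_add_left _ _ _
      _ ≤ 1 := by linarith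
  · -- reverse
    intro x hx
    have hxK' : ∀ u ∈ polarBody K, ⟪u, x⟫ ≤ 1 := fun u hu => by
      have : u + 0 ∈ polarBody K + polarBody L :=
        Set.add_mem_add hu (zero_mem_polarBody L)
      simpa using hx _ this
    have hxL' : ∀ v ∈ polarBody L, ⟪v, x⟫ ≤ 1 := fun v hv => by
      have : (0 : EuclideanSpace ℝ (Fin n)) + v ∈ polarBody K + polarBody L :=
        Set.add_mem_add (zero_mem_polarBody K) hv
      simpa using hx _ this
    by_cases hx0 : x = 0
    · subst hx0
      simp only [Set.mem_iUnion]
      refine ⟨1/2, ⟨by norm_num, by norm_num⟩, ?_, ?_⟩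
      · exact ⟨0, hK0, by simp⟩
      · exact ⟨0, hL0, by simp⟩
    · -- sup over polars
      set S := (fun u => ⟪u, x⟫) '' polarBody K with hS
      set T := (fun v => ⟪v, x⟫) '' polarBody L with hT
      have hSne : S.Nonempty := ⟨⟪(0:EuclideanSpace ℝ (Fin n)), x⟫,
        ⟨0, zero_mem_polarBody K, rfl⟩⟩
      have hTne : T.Nonempty := ⟨⟪(0:EuclideanSpace ℝ (Fin n)), x⟫,
        ⟨0, zero_mem_polarBody L, rfl⟩⟩
      have hSbdd : BddAbove S := ⟨1, by rintro s ⟨u, hu, rfl⟩; exact hxK' u hu⟩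
      have hTbdd : BddAbove T := ⟨1, by rintro s ⟨v, hv, rfl⟩; exact hxL' v hv⟩
      set a := sSup S with ha
      set b := sSup T with hb
      have haS : ∀ u ∈ polarBody K, ⟪u, x⟫ ≤ a := fun u hu =>
        le_csSup hSbdd ⟨u, hu, rfl⟩
      have hbT : ∀ v ∈ polarBody L, ⟪v, x⟫ ≤ b := fun v hv =>
        le_csSup hTbdd ⟨v, hv, rfl⟩
      have ha0 : 0 ≤ a := by
        have := le_csSup hSbdd (⟨0, zero_mem_polarBody K, rfl⟩ : ⟪(0:EuclideanSpace ℝ (Fin n)), x⟫ ∈ S)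
        simpa using this
      have hb0 : 0 ≤ b := by
        have := le_csSup hTbdd (⟨0, zero_mem_polarBody L, rfl⟩ : ⟪(0:EuclideanSpace ℝ (Fin n)), x⟫ ∈ T)
        simpa using this
      have hab : a + b ≤ 1 := by
        have h1 : ∀ v ∈ polarBody L, a ≤ 1 - ⟪v, x⟫ := by
          intro v hv
          apply csSup_le hSne
          rintro s ⟨u, hu, rfl⟩
          have : u + v ∈ polarBody K + polarBody L := Set.add_mem_add hu hv
          have h2 := hx _ this
          have : ⟪u + v, x⟫ = ⟪u, x⟫ + ⟪v, x⟫ := inner_add_left _ _ _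
          linarith [h2, this.symm.le, this.le]
        have h3 : b ≤ 1 - a := by
          apply csSup_le hTne
          rintro s ⟨v, hv, rfl⟩
          linarith [h1 v hv]
        linarith
      -- a > 0 since x ≠ 0
      have hpos : ∀ (M : Set (EuclideanSpace ℝ (Fin n))), IsCompact M → Convex ℝ M →
          (0 : EuclideanSpace ℝ (Fin n)) ∈ M →
          (∀ u ∈ polarBody M, ⟪u, x⟫ ≤ 0) → False := by
        intro M hMc hMconv hM0 hle
        obtain ⟨R, hR⟩ := hMc.isBounded.exists_norm_le
        have hR0 : 0 ≤ R := le_trans (by simp) (hR 0 hM0)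
        set t := ‖x‖ / (2 * (R + 1)) with htdef
        have hxn : 0 < ‖x‖ := norm_pos_iff.mpr hx0
        have htpos : 0 < t := by positivity
        have hmem : x ∈ t • M := by
          apply mem_smul_of_polar_le hMc.isClosed hMconv hM0 htpos
          intro u hu
          exact le_trans (hle u hu) htpos.le
        obtain ⟨m, hm, hxe⟩ := hmem
        have h1 : ‖x‖ ≤ t * R := by
          rw [← hxe, norm_smul, Real.norm_eq_abs, abs_of_pos htpos]
          exact mul_le_mul_of_nonneg_left (hR m hm) htpos.le
        have h2 : t * (R + 1) = ‖x‖ / 2 := by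
          rw [htdef]; field_simp
        nlinarith
      have hapos : 0 < a := by
        rcases lt_or_ge 0 a with h | h
        · exact h
        · exfalso
          exact hpos K hK_compact hK_conv hK0 (fun u hu => le_trans (haS u hu) h)
      have hbpos : 0 < b := by
        rcases lt_or_ge 0 b with h | h
        · exact h
        · exfalso
          exact hpos L hL_compact hL_conv hL0 (fun v hv => le_trans (hbT v hv) h)
      have ha1 : a < 1 := by linarith
      simp only [Set.mem_iUnion]
      refine ⟨a, ⟨ha0, ha1.le⟩, ?_, ?_⟩
      · exact mem_smul_of_polar_le hK_compact.isClosed hK_conv hK0 hapos haS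
      · exact mem_smul_of_polar_le hL_compact.isClosed hL_conv hL0 (by linarith)
          (fun v hv => le_trans (hbT v hv) (by linarith))
end
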